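/- Let E(z) = Σ_{k=1}^∞ z^k/(k!·k) and P_n = Σ_{k=1}^n (−1)^k · C(n,k) · (1/k) · (1 − 1/k!). Then for every real z with |z| < 1, the series Σ_{n=0}^∞ P_n z^n converges and equals log(1−z)/(1−z) − (1/(1−z)) · E(−z/(1−z)). -/

import Mathlib

/-- The E-function `E(z) = ∑_{k=1}^∞ z^k/(k!·k)`. -/
noncomputable def Egamma (z : ℝ) : ℝ :=
  ∑' k : ℕ, z ^ (k + 1) / ((Nat.factorial (k + 1) : ℝ) * ((k : ℝ) + 1))

/-- `P_n = ∑_{k=1}^n (−1)^k C(n,k) (1/k)(1 − 1/k!)`. -/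
noncomputable def gammaSeq (n : ℕ) : ℝ :=
  ∑ k ∈ Finset.Icc 1 n,
    (-1 : ℝ) ^ k * (Nat.choose n k : ℝ) * (1 / (k : ℝ)) * (1 - 1 / (Nat.factorial k : ℝ))

open Finset
open scoped Nat

/-!
Split `P_n = -H_n + Q_n`, where `H_n` is the harmonic number (by the classical identity
`H_n = ∑_k (-1)^(k-1) C(n,k) / k`) and `Q_n = ∑_k C(n,k) (-1)^(k-1) / (k!·k)`.
The harmonic numbers have generating function `-log(1-z)/(1-z)` (a Cauchy product of the
logarithmic and the geometric series). `Q_n` is the binomial transform of the coefficients of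
`-E(-w)`, and a binomial transform satisfies
`∑_n (∑_k C(n,k) a_k) zⁿ = (1/(1-z)) ∑_k a_k (z/(1-z))^k` as soon as the double series converges
absolutely. Since these coefficients decay like `1/k!`, this holds on all of `|z| < 1`; for the
coefficients of `P_n` themselves it would only hold for `|z| < 1/2`.
-/

theorem sum_range_neg_one_pow_mul_choose_div_succ (n : ℕ) :
    ∑ i ∈ range (n + 1), (-1 : ℚ) ^ i * n.choose i / (i + 1) = 1 / (n + 1) := by
  have hsum : ∑ i ∈ range (n + 1), (-1 : ℚ) ^ i * (n + 1).choose (i + 1) = 1 := by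
    have h := Int.alternating_sum_range_choose (n := n + 1)
    rw [sum_range_succ', if_neg n.succ_ne_zero] at h
    simp only [pow_succ, mul_neg_one, neg_mul, sum_neg_distrib, pow_zero, Nat.choose_zero_right,
      Nat.cast_one, mul_one] at h
    exact_mod_cast neg_add_eq_zero.mp h
  rw [eq_div_iff (by positivity), sum_mul]
  refine (sum_congr rfl fun i _ => ?_).trans hsum
  have := Nat.add_one_mul_choose_eq n i
  rw [div_mul_eq_mul_div, div_eq_iff (by positivity), mul_assoc, mul_assoc]
  congr 1
  exact_mod_cast (mul_comm _ _).trans this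

theorem harmonic_eq_sum_range_neg_one_pow_mul_choose_div (n : ℕ) :
    harmonic n = ∑ i ∈ range n, (-1 : ℚ) ^ i * n.choose (i + 1) / (i + 1) := by
  induction n with
  | zero => simp
  | succ n ih =>
    simp only [Nat.choose_succ_succ, Nat.cast_add, mul_add, add_div, sum_add_distrib,
      sum_range_neg_one_pow_mul_choose_div_succ]
    rw [sum_range_succ _ n, Nat.choose_succ_self, ← ih, harmonic_succ]
    push_cast
    ring

theorem Real.hasSum_pow_div_log_one_sub {x : ℝ} (hx : |x| < 1) :
    HasSum (fun n : ℕ => x ^ n / n) (-Real.log (1 - x)) := by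
  rw [← hasSum_nat_add_iff' 1]
  simpa using Real.hasSum_pow_div_log_of_abs_lt_one hx

theorem hasSum_harmonic_mul_pow {z : ℝ} (hz : |z| < 1) :
    HasSum (fun n => (harmonic n : ℝ) * z ^ n) (-Real.log (1 - z) / (1 - z)) := by
  have hlog := Real.hasSum_pow_div_log_one_sub hz
  have hgeom := hasSum_geometric_of_abs_lt_one hz
  have hlog_norm : Summable fun n : ℕ => ‖z ^ n / n‖ := by
    simpa [abs_pow] using (Real.hasSum_pow_div_log_one_sub (x := |z|) (by rwa [abs_abs])).summable
  have := hasSum_sum_range_mul_of_summable_norm hlog_norm hgeom.summable.norm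
  rw [hlog.tsum_eq, hgeom.tsum_eq, ← div_eq_mul_inv] at this
  refine this.congr_fun fun n => ?_
  have hterm : ∀ k ∈ range (n + 1), z ^ k / k * z ^ (n - k) = (k : ℝ)⁻¹ * z ^ n := by
    intro k hk
    rw [div_mul_eq_mul_div, ← pow_add, Nat.add_sub_cancel' (mem_range_succ_iff.mp hk)]
    ring
  rw [sum_congr rfl hterm, ← sum_mul, sum_range_succ', harmonic]
  simp

theorem HasSum.sum_antidiagonal {α : Type*} [AddCommMonoid α] [TopologicalSpace α]
    [ContinuousAdd α] [RegularSpace α] {f : ℕ × ℕ → α} {a : α} (hf : HasSum f a) :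
    HasSum (fun n => ∑ p ∈ antidiagonal n, f p) a :=
  HasSum.sigma (HasAntidiagonal.sigmaAntidiagonalEquivProd.hasSum_iff.mpr hf) fun n =>
    (antidiagonal n).hasSum f

theorem hasSum_sum_choose_mul_pow {𝕜 : Type*} [NormedField 𝕜] [CompleteSpace 𝕜]
    {a : ℕ → 𝕜} {z s : 𝕜} (hz : ‖z‖ < 1)
    (ha : Summable fun k => ‖a k‖ * (‖z‖ / (1 - ‖z‖)) ^ k)
    (hs : HasSum (fun k => a k * (z / (1 - z)) ^ k) s) :
    HasSum (fun n => (∑ k ∈ range (n + 1), n.choose k * a k) * z ^ n) (s / (1 - z)) := by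
  have hz' : 1 - z ≠ 0 := sub_ne_zero.mpr fun h => by simp [← h] at hz
  have hnz : 1 - ‖z‖ ≠ 0 := (sub_pos.mpr hz).ne'
  -- `f (k, m)` is the `k`-th summand of the coefficient of `z ^ (k + m)`
  set f : ℕ × ℕ → 𝕜 := fun p => a p.1 * z ^ p.1 * ((p.2 + p.1).choose p.1 * z ^ p.2)
  set g : ℕ × ℕ → ℝ := fun p => ‖a p.1‖ * ‖z‖ ^ p.1 * ((p.2 + p.1).choose p.1 * ‖z‖ ^ p.2)
  have hfiber (k : ℕ) : HasSum (fun m => f (k, m)) (a k * (z / (1 - z)) ^ k / (1 - z)) := by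
    have := (hasSum_choose_mul_geometric_of_norm_lt_one k hz).mul_left (a k * z ^ k)
    rwa [show a k * z ^ k * (1 / (1 - z) ^ (k + 1)) = a k * (z / (1 - z)) ^ k / (1 - z) by
      rw [div_pow, pow_succ]; field_simp] at this
  have hfiber_norm (k : ℕ) :
      HasSum (fun m => g (k, m)) (‖a k‖ * (‖z‖ / (1 - ‖z‖)) ^ k / (1 - ‖z‖)) := by
    have := (hasSum_choose_mul_geometric_of_norm_lt_one k (r := ‖z‖) (by simpa using hz)).mul_left
      (‖a k‖ * ‖z‖ ^ k)
    rwa [show ‖a k‖ * ‖z‖ ^ k * (1 / (1 - ‖z‖) ^ (k + 1))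
        = ‖a k‖ * (‖z‖ / (1 - ‖z‖)) ^ k / (1 - ‖z‖) by rw [div_pow, pow_succ]; field_simp] at this
  have hf : Summable f := by
    refine Summable.of_norm_bounded ((summable_prod_of_nonneg fun _ => by positivity).mpr
      ⟨fun k => (hfiber_norm k).summable, ?_⟩) fun p => ?_
    · simpa only [(hfiber_norm _).tsum_eq] using ha.div_const (1 - ‖z‖)
    · simp only [f, g, norm_mul, norm_pow]
      gcongr
      simpa using Nat.norm_cast_le (α := 𝕜) _
  have hsum : HasSum f (s / (1 - z)) :=
    (hs.div_const _).unique (hf.hasSum.prod_fiberwise hfiber) ▸ hf.hasSum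
  refine hsum.sum_antidiagonal.congr_fun fun n => ?_
  rw [Nat.sum_antidiagonal_eq_sum_range_succ_mk, sum_mul]
  refine sum_congr rfl fun k hk => ?_
  obtain ⟨m, rfl⟩ := Nat.exists_eq_add_of_le (mem_range_succ_iff.mp hk)
  simp only [f, Nat.add_sub_cancel_left, add_comm m k, pow_add]
  ring

theorem summable_pow_div_factorial_mul_natCast (x : ℝ) :
    Summable fun k : ℕ => x ^ k / (k ! * k) := by
  refine (Real.summable_pow_div_factorial |x|).of_norm_bounded fun k => ?_
  rw [norm_div, norm_pow, Real.norm_eq_abs, norm_mul, Real.norm_natCast, Real.norm_natCast]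
  rcases k.eq_zero_or_pos with rfl | hk
  · simp
  · exact div_le_div_of_nonneg_left (by positivity) (by positivity)
      (le_mul_of_one_le_right (by positivity) (by exact_mod_cast hk))

/-- The `k = 0` term is `x ^ 0 / 0 = 0`, so this is the series of `E` indexed from `0`. -/
theorem hasSum_Egamma (x : ℝ) : HasSum (fun k : ℕ => x ^ k / (k ! * k)) (Egamma x) := by
  have hs := summable_pow_div_factorial_mul_natCast x
  convert hs.hasSum using 1
  rw [Egamma, hs.tsum_eq_zero_add]
  simp

theorem gammaSeq_eq_neg_harmonic_add (n : ℕ) :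
    gammaSeq n =
      -harmonic n + ∑ k ∈ range (n + 1), n.choose k * (-(-1 : ℝ) ^ k / (k ! * k)) := by
  rw [gammaSeq, ← Ico_add_one_right_eq_Icc, sum_Ico_eq_sum_range, sum_range_succ' _ n,
    harmonic_eq_sum_range_neg_one_pow_mul_choose_div]
  push_cast
  rw [mul_zero, div_zero, mul_zero, add_zero, ← sum_neg_distrib, ← sum_add_distrib]
  refine sum_congr rfl fun i _ => ?_
  rw [add_comm 1 i]
  field_simp
  ring

/-- For real `|z| < 1`, the series `∑ P_n zⁿ` converges and equals
`log(1−z)/(1−z) − (1/(1−z)) E(−z/(1−z))`. -/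
theorem gammaSeq_generating_function (z : ℝ) (hz : |z| < 1) :
    HasSum (fun n : ℕ => gammaSeq n * z ^ n)
      (Real.log (1 - z) / (1 - z) - (1 / (1 - z)) * Egamma (-z / (1 - z))) := by
  have hE : HasSum
      (fun n => (∑ k ∈ range (n + 1), n.choose k * (-(-1 : ℝ) ^ k / (k ! * k))) * z ^ n)
      (-Egamma (-z / (1 - z)) / (1 - z)) := by
    refine hasSum_sum_choose_mul_pow (by rwa [Real.norm_eq_abs]) ?_ ?_
    · refine (summable_pow_div_factorial_mul_natCast (|z| / (1 - |z|))).congr fun k => ?_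
      simp [div_eq_mul_inv, mul_comm]
    · refine (hasSum_Egamma _).neg.congr_fun fun k => ?_
      rw [neg_div, neg_pow]
      ring
  rw [show Real.log (1 - z) / (1 - z) - 1 / (1 - z) * Egamma (-z / (1 - z))
      = -(-Real.log (1 - z) / (1 - z)) + -Egamma (-z / (1 - z)) / (1 - z) by ring]
  refine ((hasSum_harmonic_mul_pow hz).neg.add hE).congr_fun fun n => ?_
  rw [gammaSeq_eq_neg_harmonic_add]
  ring
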